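/- Let p₁ ∈ M₂(ℂ) be a traceless Hermitian matrix and let q₂, p₂ ∈ M₂(ℂ) be real symmetric matrices with det q₂ = 1. Set L₁ = p₁ and L₂ = p₂ q₂⁻¹. Then det(L₁ + L₂) - det(L₁† + L₂†) = 2⟨p₁, [p₂, q₂⁻¹]⟩, where [A,B] = AB - BA. Consequently det(L₁ + L₂) is a real number if and only if p₁ has real entries or p₂ commutes with q₂. -/

import Mathlib

open Matrix

/-- The symmetric complex bilinear form on `M₂(ℂ)` obtained by polarizing the
determinant: `⟨A,B⟩ = ½(det(A+B) - det A - det B)`. -/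
noncomputable def detBilin (A B : Matrix (Fin 2) (Fin 2) ℂ) : ℂ :=
  ((A + B).det - A.det - B.det) / 2

/-!
For 2×2 matrices `det (A + B) = det A + det B + tr A tr B - tr (A B)`, so `2⟨A, ·⟩` is the linear
form `B ↦ tr A tr B - tr (A B)`. As `p₁`, `p₂`, `q₂⁻¹` are Hermitian, the conjugate determinant is
`det (p₁ + q₂⁻¹ p₂)`, and `p₂ q₂⁻¹`, `q₂⁻¹ p₂` have equal determinants, whence the identity. The
commutator of two symmetric 2×2 matrices is a multiple `k J` of `J = !![0, 1; -1, 0]`, and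
`2⟨p₁, k J⟩ = k (p₁₀₁ - p₁₁₀)`: `k` vanishes iff `p₂` commutes with `q₂`, the other factor iff the
Hermitian `p₁` is symmetric, i.e. real.
-/

namespace Matrix

theorem isSymm_fin_two_iff {α : Type*} {A : Matrix (Fin 2) (Fin 2) α} :
    A.IsSymm ↔ A 0 1 = A 1 0 := by
  refine ⟨fun h => (h.apply 0 1).symm, fun h => IsSymm.ext fun i j => ?_⟩
  fin_cases i <;> fin_cases j <;> simp [h]

section CommRing

variable {R : Type*} [CommRing R]

theorem det_add_fin_two (A B : Matrix (Fin 2) (Fin 2) R) :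
    (A + B).det = A.det + B.det + (A.trace * B.trace - (A * B).trace) := by
  simp only [det_fin_two, trace_fin_two, add_apply, mul_apply, Fin.sum_univ_two]
  ring

theorem IsSymm.commutator_fin_two {B C : Matrix (Fin 2) (Fin 2) R} (hB : B.IsSymm)
    (hC : C.IsSymm) : B * C - C * B = (B * C - C * B) 0 1 • !![0, 1; -1, 0] := by
  have hB₁₀ := hB.apply 0 1
  have hC₁₀ := hC.apply 0 1
  ext i j
  fin_cases i <;> fin_cases j <;>
    simp only [Fin.isValue, Fin.zero_eta, Fin.mk_one, sub_apply, smul_apply, mul_apply,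
      Fin.sum_univ_two, hB₁₀, hC₁₀, of_apply, cons_val', cons_val_zero, cons_val_one,
      cons_val_fin_one, smul_eq_mul] <;> ring

theorem IsSymm.commute_iff_fin_two {B C : Matrix (Fin 2) (Fin 2) R} (hB : B.IsSymm)
    (hC : C.IsSymm) : Commute B C ↔ (B * C - C * B) 0 1 = 0 := by
  rw [Commute, SemiconjBy, ← sub_eq_zero]
  refine ⟨fun h => by rw [h, zero_apply], fun h => ?_⟩
  rw [hB.commutator_fin_two hC, h, zero_smul]

variable {n : Type*} [Fintype n] [DecidableEq n]

theorem commute_nonsing_inv_right_iff {A B : Matrix n n R} (hB : IsUnit B.det) :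
    Commute A B⁻¹ ↔ Commute A B := by
  have key (C : Matrix n n R) (hC : IsUnit C.det) (h : Commute A C) : Commute A C⁻¹ := by
    let := C.invertibleOfIsUnitDet hC
    simpa only [invOf_eq_nonsing_inv] using h.invOf_right
  refine ⟨fun h => ?_, key B hB⟩
  simpa only [nonsing_inv_nonsing_inv B hB] using key _ (isUnit_nonsing_inv_det B hB) h

end CommRing

variable {n : Type*}

theorem isHermitian_of_isSymm_of_im_eq_zero {A : Matrix n n ℂ} (hA : A.IsSymm)
    (hre : ∀ i j, (A i j).im = 0) : A.IsHermitian := by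
  ext i j
  rw [conjTranspose_apply, hA.apply]
  exact Complex.conj_eq_iff_im.2 (hre i j)

theorem IsHermitian.im_eq_zero_iff_isSymm {A : Matrix n n ℂ} (hA : A.IsHermitian) :
    (∀ i j, (A i j).im = 0) ↔ A.IsSymm := by
  rw [IsSymm.ext_iff]
  refine forall₂_congr fun i j => ?_
  rw [← hA.apply j i]
  exact Complex.conj_eq_iff_im.symm

theorem im_det_eq_zero_iff [Fintype n] [DecidableEq n] (M : Matrix n n ℂ) :
    M.det.im = 0 ↔ M.det - Mᴴ.det = 0 := by
  rw [det_conjTranspose, sub_eq_zero, ← Complex.conj_eq_iff_im, eq_comm]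
  rfl

end Matrix

theorem two_mul_detBilin (A B : Matrix (Fin 2) (Fin 2) ℂ) :
    2 * detBilin A B = A.trace * B.trace - (A * B).trace := by
  rw [detBilin, det_add_fin_two]
  ring

theorem det_add_sub_det_add_of_det_eq (A B C : Matrix (Fin 2) (Fin 2) ℂ) (h : B.det = C.det) :
    (A + B).det - (A + C).det = 2 * detBilin A (B - C) := by
  rw [two_mul_detBilin, det_add_fin_two, det_add_fin_two, h, Matrix.mul_sub, trace_sub, trace_sub]
  ring

theorem two_mul_detBilin_smul_rotation (A : Matrix (Fin 2) (Fin 2) ℂ) (k : ℂ) :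
    2 * detBilin A (k • !![0, 1; -1, 0]) = k * (A 0 1 - A 1 0) := by
  rw [two_mul_detBilin]
  simp only [Fin.isValue, trace_fin_two, smul_of, smul_cons, smul_eq_mul, smul_empty, mul_apply,
    Fin.sum_univ_two, of_apply, cons_val', cons_val_zero, cons_val_one, cons_val_fin_one]
  ring

theorem imaginary_part_of_total_momentum_general
    (p₁ q₂ p₂ : Matrix (Fin 2) (Fin 2) ℂ)
    (hp₁herm : p₁.IsHermitian)
    (hq₂symm : q₂ᵀ = q₂) (hq₂real : ∀ i j, (q₂ i j).im = 0)
    (hp₂symm : p₂ᵀ = p₂) (hp₂real : ∀ i j, (p₂ i j).im = 0)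
    (hq₂det : q₂.det = 1) :
    ((p₁ + p₂ * q₂⁻¹).det - (p₁ᴴ + (p₂ * q₂⁻¹)ᴴ).det
        = 2 * detBilin p₁ (p₂ * q₂⁻¹ - q₂⁻¹ * p₂))
    ∧ (((p₁ + p₂ * q₂⁻¹).det).im = 0
        ↔ (∀ i j, (p₁ i j).im = 0) ∨ p₂ * q₂ = q₂ * p₂) := by
  have hq₂herm := isHermitian_of_isSymm_of_im_eq_zero hq₂symm hq₂real
  have hp₂herm := isHermitian_of_isSymm_of_im_eq_zero hp₂symm hp₂real
  have hq₂inv : q₂⁻¹.IsSymm := IsSymm.inv hq₂symm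
  have identity : (p₁ + p₂ * q₂⁻¹).det - (p₁ᴴ + (p₂ * q₂⁻¹)ᴴ).det
      = 2 * detBilin p₁ (p₂ * q₂⁻¹ - q₂⁻¹ * p₂) := by
    rw [hp₁herm.eq, conjTranspose_mul, hq₂herm.inv.eq, hp₂herm.eq]
    exact det_add_sub_det_add_of_det_eq _ _ _ (det_mul_comm _ _)
  refine ⟨identity, ?_⟩
  rw [im_det_eq_zero_iff, conjTranspose_add, identity, IsSymm.commutator_fin_two hp₂symm hq₂inv,
    two_mul_detBilin_smul_rotation, mul_eq_zero, sub_eq_zero,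
    ← IsSymm.commute_iff_fin_two hp₂symm hq₂inv,
    commute_nonsing_inv_right_iff (hq₂det ▸ isUnit_one), hp₁herm.im_eq_zero_iff_isSymm,
    isSymm_fin_two_iff, or_comm]
  rfl

/-- for `p₁` traceless Hermitian and `q₂, p₂` real symmetric with
`det q₂ = 1`, setting `L₁ = p₁` and `L₂ = p₂ q₂⁻¹`, one has
`det(L₁+L₂) - det(L₁†+L₂†) = 2⟨p₁, [p₂, q₂⁻¹]⟩`; consequently `det(L₁+L₂)` is real
iff `p₁` has real entries or `p₂` commutes with `q₂`. -/
theorem imaginary_part_of_total_momentum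
    (p₁ q₂ p₂ : Matrix (Fin 2) (Fin 2) ℂ)
    (hp₁herm : p₁.IsHermitian) (hp₁tr : p₁.trace = 0)
    (hq₂symm : q₂ᵀ = q₂) (hq₂real : ∀ i j, (q₂ i j).im = 0)
    (hp₂symm : p₂ᵀ = p₂) (hp₂real : ∀ i j, (p₂ i j).im = 0)
    (hq₂det : q₂.det = 1) :
    ((p₁ + p₂ * q₂⁻¹).det - (p₁ᴴ + (p₂ * q₂⁻¹)ᴴ).det
        = 2 * detBilin p₁ (p₂ * q₂⁻¹ - q₂⁻¹ * p₂))
    ∧ (((p₁ + p₂ * q₂⁻¹).det).im = 0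
        ↔ (∀ i j, (p₁ i j).im = 0) ∨ p₂ * q₂ = q₂ * p₂) :=
  imaginary_part_of_total_momentum_general p₁ q₂ p₂ hp₁herm hq₂symm hq₂real hp₂symm hp₂real hq₂det
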